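/- arXiv:2107.01893 — 2 statements merged into one kernel-verified Lean document; each statement's English description precedes it below -/
import Mathlib

section
/- If (δ, ε) is tree-like with least-resolved tree (T*, t*, λ*), then every refinement T of T* admits a vertex labeling t and an edge labeling λ such that (T, t, λ) explains (δ, ε). -/
/-- A rooted phylogenetic tree with leaf set `L`: a finite vertex type `V`,
a root, a parent map (the root is its own parent), every vertex reaches the
root by iterating `parent`, the leaves are exactly the vertices without
children and are in bijection with `L`, and every inner vertex has at least
two children. -/
structure PhyloTree (L : Type) : Type 1 where
  V : Type
  fintypeV : Fintype V
  root : V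
  parent : V → V
  leaf : L → V
  parent_root : parent root = root
  reach : ∀ v : V, ∃ n : ℕ, parent^[n] v = root
  leaf_inj : Function.Injective leaf
  leaf_iff : ∀ v : V, (∀ u : V, parent u = v → u = v) ↔ ∃ x : L, leaf x = v
  phylo : ∀ v : V, (¬ ∃ x : L, leaf x = v) →
      ∃ u u' : V, u ≠ u' ∧ parent u = v ∧ parent u' = v ∧ u ≠ v ∧ u' ≠ v

namespace PhyloTree

variable {L : Type} (T : PhyloTree L)

/-- `v` is an ancestor (or equal) of `w`. -/
def anc (v w : T.V) : Prop := ∃ n : ℕ, T.parent^[n] w = v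

def isLeaf (v : T.V) : Prop := ∃ x : L, T.leaf x = v

/-- The cluster `L(T(v))`: the set of leaves below `v`. -/
def cluster (v : T.V) : Set L := {x : L | T.anc v (T.leaf x)}

/-- The cluster system `H(T)`. -/
def clusters : Set (Set L) := Set.range T.cluster

/-- `w` is the last common ancestor of the leaves `x` and `y`. -/
def isLCA (x y : L) (w : T.V) : Prop :=
  T.anc w (T.leaf x) ∧ T.anc w (T.leaf y) ∧
    ∀ u : T.V, T.anc u (T.leaf x) → T.anc u (T.leaf y) → T.anc u w

/-- `u` is a child of `v`. -/
def childOf (u v : T.V) : Prop := T.parent u = v ∧ u ≠ v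

/-- The edge `{parent u, u}` (encoded by its lower endpoint `u`) is an inner edge. -/
def innerEdge (u : T.V) : Prop := T.parent u ≠ u ∧ ¬ T.isLeaf u

/-- The edge `{parent u, u}` lies on the path from the vertex `w` down to the leaf `y`. -/
def onPath (w : T.V) (y : L) (u : T.V) : Prop :=
  T.anc w u ∧ u ≠ w ∧ T.anc u (T.leaf y)

/-- The vertex-labeled tree `(T,t)` explains `δ`. -/
def ExplainsDelta {M : Type} (t : T.V → M) (δ : L → L → M) : Prop :=
  ∀ x y : L, x ≠ y → ∀ w : T.V, T.isLCA x y w → t w = δ x y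

/-- The edge-labeled tree `(T,λ)` explains `ε`; edge labels are encoded on the
lower endpoint of each edge. -/
def ExplainsEps {N : Type} (lam : T.V → Finset N) (ε : L → L → Finset N) : Prop :=
  ∀ x y : L, x ≠ y → ∀ w : T.V, T.isLCA x y w →
    ∀ k : N, k ∈ ε x y ↔ ∃ u : T.V, T.onPath w y u ∧ k ∈ lam u

/-- The vertex labeling is discriminating: the endpoints of every inner edge
carry distinct labels. -/
def Discriminating {M : Type} (t : T.V → M) : Prop :=
  ∀ u : T.V, T.innerEdge u → t u ≠ t (T.parent u)

/-- Total number of labels over all edges, `Σ_{e ∈ E(T)} |λ(e)|`. -/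
noncomputable def labelSum {N : Type} (lam : T.V → Finset N) : ℕ :=
  letI := T.fintypeV
  letI := Classical.decEq T.V
  ∑ v : T.V, if T.parent v = v then 0 else (lam v).card

/-- Condition (C): every inner vertex has a child joined by an empty-labeled edge. -/
def CondC {N : Type} (lam : T.V → Finset N) : Prop :=
  ∀ v : T.V, ¬ T.isLeaf v → ∃ u : T.V, T.childOf u v ∧ lam u = ∅

/-- Condition (C1): if `t(v) ∈ M₀` then all edges from `v` to its children are empty. -/
def CondC1 {M N : Type} (t : T.V → M) (lam : T.V → Finset N) (M0 : Set M) : Prop :=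
  ∀ v u : T.V, T.childOf u v → t v ∈ M0 → lam u = ∅

/-- Condition (C2): at every vertex, at most one edge to a child is nonempty. -/
def CondC2 {N : Type} (lam : T.V → Finset N) : Prop :=
  ∀ v u u' : T.V, T.childOf u v → T.childOf u' v → lam u ≠ ∅ → lam u' ≠ ∅ → u = u'

/-- `(T1,λ1) ≤ (T2,λ2)`: the edge-labeled tree `(T2,λ2)` refines `(T1,λ1)`. -/
def LeLabeled {N : Type} (T1 : PhyloTree L) (lam1 : T1.V → Finset N)
    (T2 : PhyloTree L) (lam2 : T2.V → Finset N) : Prop :=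
  T1.clusters ⊆ T2.clusters ∧
    ∀ (v1 : T1.V) (v2 : T2.V), T1.parent v1 ≠ v1 → T2.parent v2 ≠ v2 →
      T1.cluster v1 = T2.cluster v2 → lam1 v1 ⊆ lam2 v2

/-- `φ` witnesses that `T'` is obtained from `T` by contracting the inner edge
`{parent u, u}`. -/
def IsContractionMap (T : PhyloTree L) (u : T.V) (T' : PhyloTree L)
    (φ : T.V → T'.V) : Prop :=
  T.innerEdge u ∧ Function.Surjective φ ∧ φ u = φ (T.parent u) ∧
    (∀ a b : T.V, φ a = φ b →
      a = b ∨ (a = u ∧ b = T.parent u) ∨ (b = u ∧ a = T.parent u)) ∧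
    (∀ v : T.V, v ≠ u → T'.parent (φ v) = φ (T.parent v)) ∧
    (∀ x : L, φ (T.leaf x) = T'.leaf x) ∧ φ T.root = T'.root

/-- `T'` is obtained from `T` by contracting the inner edge `{parent u, u}`. -/
def ContractEdge (T : PhyloTree L) (u : T.V) (T' : PhyloTree L) : Prop :=
  ∃ φ : T.V → T'.V, IsContractionMap T u T' φ

/-- Isomorphism of rooted trees on the same leaf set. -/
def Isomorphic (T1 T2 : PhyloTree L) : Prop :=
  ∃ φ : T1.V ≃ T2.V, (∀ v : T1.V, φ (T1.parent v) = T2.parent (φ v)) ∧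
    ∀ x : L, φ (T1.leaf x) = T2.leaf x

def IsSymbolicUltrametric {M : Type} (δ : L → L → M) : Prop :=
  ∃ (T : PhyloTree L) (t : T.V → M), T.ExplainsDelta t δ

def IsFitchMap {N : Type} (ε : L → L → Finset N) : Prop :=
  ∃ (T : PhyloTree L) (lam : T.V → Finset N), T.ExplainsEps lam ε

def TreeLike {M N : Type} (δ : L → L → M) (ε : L → L → Finset N) : Prop :=
  ∃ (T : PhyloTree L) (t : T.V → M) (lam : T.V → Finset N),
    T.ExplainsDelta t δ ∧ T.ExplainsEps lam ε

def MTreeLike {M N : Type} (δ : L → L → M) (ε : L → L → Finset N) (M0 : Set M) : Prop :=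
  ∃ (T : PhyloTree L) (t : T.V → M) (lam : T.V → Finset N),
    T.ExplainsDelta t δ ∧ T.ExplainsEps lam ε ∧ T.CondC lam ∧ T.CondC1 t lam M0

end PhyloTree

/-- A hierarchy on `L`. -/
def IsHierarchy {L : Type} (H : Set (Set L)) : Prop :=
  Set.univ ∈ H ∧ (∀ x : L, {x} ∈ H) ∧
    (∀ A ∈ H, ∀ B ∈ H, A ∩ B = A ∨ A ∩ B = B ∨ A ∩ B = (∅ : Set L)) ∧
    (∅ : Set L) ∉ H

namespace PhyloTree

variable {L : Type} (T : PhyloTree L)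

open Classical in
noncomputable def aDepth (v : T.V) : ℕ := Nat.find (T.reach v)

open Classical in
lemma aDepth_spec (v : T.V) : T.parent^[T.aDepth v] v = T.root := Nat.find_spec (T.reach v)

open Classical in
lemma aDepth_le {v : T.V} {n : ℕ} (h : T.parent^[n] v = T.root) : T.aDepth v ≤ n :=
  Nat.find_min' (T.reach v) h

lemma anc_refl (v : T.V) : T.anc v v := ⟨0, rfl⟩

lemma anc_trans {u v w : T.V} (h1 : T.anc u v) (h2 : T.anc v w) : T.anc u w := by
  obtain ⟨n, hn⟩ := h1; obtain ⟨m, hm⟩ := h2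
  exact ⟨n + m, by rw [Function.iterate_add_apply, hm, hn]⟩

lemma root_iterate (n : ℕ) : T.parent^[n] T.root = T.root :=
  Function.iterate_fixed T.parent_root n

lemma fixed_eq_root {v : T.V} (h : T.parent v = v) : v = T.root := by
  obtain ⟨n, hn⟩ := T.reach v
  rw [Function.iterate_fixed h n] at hn; exact hn

lemma cycle_eq_root {v : T.V} {k : ℕ} (hk : k ≠ 0) (h : T.parent^[k] v = v) : v = T.root := by
  obtain ⟨n, hn⟩ := T.reach v
  have h2 : T.parent^[k * n] v = v := by
    have := Function.iterate_fixed (f := T.parent^[k]) h n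
    rwa [← Function.iterate_mul] at this
  have hle : n ≤ k * n := Nat.le_mul_of_pos_left n (Nat.pos_of_ne_zero hk)
  have : k * n = (k * n - n) + n := by omega
  rw [this, Function.iterate_add_apply, hn, T.root_iterate] at h2
  exact h2.symm

lemma anc_antisymm {u v : T.V} (h1 : T.anc u v) (h2 : T.anc v u) : u = v := by
  obtain ⟨n, hn⟩ := h1; obtain ⟨m, hm⟩ := h2
  rcases Nat.eq_zero_or_pos (m + n) with h | h
  · have hn0 : n = 0 := by omega
    rw [hn0] at hn; exact hn.symm
  · have hcyc : T.parent^[m + n] v = v := by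
      rw [Function.iterate_add_apply, hn, hm]
    have hv : v = T.root := T.cycle_eq_root (by omega) hcyc
    rw [← hn, hv, T.root_iterate, ← hv]

lemma anc_total {u v w : T.V} (h1 : T.anc u w) (h2 : T.anc v w) : T.anc u v ∨ T.anc v u := by
  obtain ⟨n, hn⟩ := h1; obtain ⟨m, hm⟩ := h2
  rcases le_total n m with h | h
  · right
    exact ⟨m - n, by rw [← hn, ← Function.iterate_add_apply, Nat.sub_add_cancel h]; exact hm⟩
  · left
    exact ⟨n - m, by rw [← hm, ← Function.iterate_add_apply, Nat.sub_add_cancel h]; exact hn⟩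

lemma anc_depth_lt {u v : T.V} (h : T.anc u v) (hne : u ≠ v) : T.aDepth u < T.aDepth v := by
  obtain ⟨n, hn⟩ := h
  have hn0 : n ≠ 0 := by rintro rfl; exact hne hn.symm
  rcases le_or_gt n (T.aDepth v) with h | h
  · have h1 : T.parent^[T.aDepth v - n] u = T.root := by
      rw [← hn, ← Function.iterate_add_apply, Nat.sub_add_cancel h]
      exact T.aDepth_spec v
    have := T.aDepth_le h1
    omega
  · have hu : u = T.root := by
      have he : n = (n - T.aDepth v) + T.aDepth v := by omega
      rw [← hn, he, Function.iterate_add_apply, T.aDepth_spec v, T.root_iterate]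
    have hdu : T.aDepth u ≤ 0 := T.aDepth_le (by rw [hu]; exact T.root_iterate 0)
    have hdv : T.aDepth v ≠ 0 := by
      intro h0
      have hv : v = T.root := by
        have := T.aDepth_spec v
        rwa [h0] at this
      exact hne (by rw [hu, hv])
    omega

lemma exists_leaf_below (v : T.V) : ∃ x : L, T.anc v (T.leaf x) := by
  classical
  letI := T.fintypeV
  have hS : (Finset.univ.filter (fun u => T.anc v u)).Nonempty :=
    ⟨v, by simp [T.anc_refl]⟩
  obtain ⟨u, hu, hmax⟩ := Finset.exists_max_image _ T.aDepth hS
  simp only [Finset.mem_filter, Finset.mem_univ, true_and] at hu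
  by_cases hleaf : ∃ x, T.leaf x = u
  · obtain ⟨x, hx⟩ := hleaf
    exact ⟨x, by rwa [hx]⟩
  · obtain ⟨c, c', hcc', hcp, hc'p, hcu, hc'u⟩ := T.phylo u hleaf
    have hanc : T.anc u c := ⟨1, by simpa using hcp⟩
    have hvc : T.anc v c := T.anc_trans hu hanc
    have h1 : T.aDepth u < T.aDepth c := T.anc_depth_lt hanc (Ne.symm hcu)
    have h2 : T.aDepth c ≤ T.aDepth u := hmax c (by simp [hvc])
    omega

lemma children_disjoint_aux {v c c' : T.V} (hc : T.parent c = v) (hc' : T.parent c' = v)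
    (hc'v : c' ≠ v) (hne : c ≠ c') (h : T.anc c' c) : False := by
  obtain ⟨k, hk⟩ := h
  have hk0 : k ≠ 0 := by rintro rfl; exact hne (by simpa using hk)
  have hkk : k = (k - 1) + 1 := by omega
  have h1 : T.parent^[k - 1] v = c' := by
    have e := Function.iterate_succ_apply T.parent (k - 1) c
    rw [hc, Nat.succ_eq_add_one, (show k - 1 + 1 = k by omega)] at e
    rw [← e]; exact hk
  have h2 : T.parent^[k] v = v := by
    rw [hkk, Function.iterate_succ_apply', h1, hc']
  have hv : v = T.root := T.cycle_eq_root hk0 h2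
  rw [hv, T.root_iterate] at h1
  exact hc'v (by rw [← h1, hv])

lemma children_disjoint {v c c' w : T.V} (hc : T.parent c = v) (hc' : T.parent c' = v)
    (hcv : c ≠ v) (hc'v : c' ≠ v) (hne : c ≠ c')
    (h1 : T.anc c w) (h2 : T.anc c' w) : False := by
  rcases T.anc_total h1 h2 with h | h
  · exact T.children_disjoint_aux hc' hc hcv (Ne.symm hne) h
  · exact T.children_disjoint_aux hc hc' hc'v hne h

lemma leaf_anc_eq {u : T.V} (hl : T.isLeaf u) : ∀ (n : ℕ) (v : T.V), T.parent^[n] v = u → v = u := by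
  have hchild := (T.leaf_iff u).mpr hl
  intro n
  induction n with
  | zero => intro v hv; exact hv
  | succ n ih =>
    intro v hv
    rw [Function.iterate_succ_apply] at hv
    exact hchild v (ih _ hv)

lemma exists_not_below {u v : T.V} (h : T.anc u v) (hne : u ≠ v) :
    ∃ x : L, T.anc u (T.leaf x) ∧ ¬ T.anc v (T.leaf x) := by
  classical
  have hex : ∃ n, T.parent^[n] v = u := h
  have hms : T.parent^[Nat.find hex] v = u := Nat.find_spec hex
  set m := Nat.find hex with hmdef
  have hm0 : m ≠ 0 := by
    intro h0; rw [h0] at hms; exact hne hms.symm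
  set c0 := T.parent^[m - 1] v with hc0
  have hc0p : T.parent c0 = u := by
    have e := Function.iterate_succ_apply' T.parent (m - 1) v
    rw [Nat.succ_eq_add_one, (show m - 1 + 1 = m by omega)] at e
    rw [hc0, ← e]; exact hms
  have hc0u : c0 ≠ u := by
    intro h0
    have := Nat.find_min hex (m := m - 1) (by omega)
    exact this (by rw [← hc0]; exact h0)
  have hnl : ¬ T.isLeaf u := by
    intro hl
    obtain ⟨n, hn⟩ := h
    exact hne (T.leaf_anc_eq hl n v hn).symm
  obtain ⟨c, c', hcc', hcp, hc'p, hcu, hc'u⟩ := T.phylo u hnl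
  obtain ⟨d, hdp, hdu, hdc0⟩ : ∃ d, T.parent d = u ∧ d ≠ u ∧ d ≠ c0 := by
    by_cases hh : c = c0
    · exact ⟨c', hc'p, hc'u, by rw [← hh]; exact Ne.symm hcc'⟩
    · exact ⟨c, hcp, hcu, hh⟩
  obtain ⟨x, hx⟩ := T.exists_leaf_below d
  refine ⟨x, T.anc_trans ⟨1, by simpa using hdp⟩ hx, ?_⟩
  intro hvx
  have hc0x : T.anc c0 (T.leaf x) := T.anc_trans ⟨m - 1, hc0.symm⟩ hvx
  exact T.children_disjoint hdp hc0p hdu hc0u hdc0 hx hc0x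

lemma anc_of_subset {u v : T.V}
    (h : ∀ x : L, T.anc v (T.leaf x) → T.anc u (T.leaf x)) : T.anc u v := by
  obtain ⟨x, hx⟩ := T.exists_leaf_below v
  rcases T.anc_total (h x hx) hx with h1 | h1
  · exact h1
  · by_cases he : v = u
    · rw [he]; exact T.anc_refl u
    · obtain ⟨y, hy1, hy2⟩ := T.exists_not_below h1 he
      exact absurd (h y hy1) hy2

lemma cluster_subset_of_anc {u v : T.V} (h : T.anc u v) : T.cluster v ⊆ T.cluster u :=
  fun _ hx => T.anc_trans h hx

lemma cluster_injective {u v : T.V} (h : T.cluster u = T.cluster v) : u = v := by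
  have h' := Set.ext_iff.mp h
  exact T.anc_antisymm (T.anc_of_subset fun x hx => (h' x).mpr hx)
    (T.anc_of_subset fun x hx => (h' x).mp hx)

lemma exists_min_containing (A : Set L) (hA : A.Nonempty) :
    ∃ w : T.V, A ⊆ T.cluster w ∧ ∀ u : T.V, A ⊆ T.cluster u → T.anc u w := by
  classical
  letI := T.fintypeV
  have hS : (Finset.univ.filter (fun v => A ⊆ T.cluster v)).Nonempty := by
    refine ⟨T.root, ?_⟩
    simp only [Finset.mem_filter, Finset.mem_univ, true_and]
    intro x _
    exact T.reach (T.leaf x)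
  obtain ⟨w, hw, hmax⟩ := Finset.exists_max_image _ T.aDepth hS
  simp only [Finset.mem_filter, Finset.mem_univ, true_and] at hw
  refine ⟨w, hw, fun u hu => ?_⟩
  obtain ⟨a, ha⟩ := hA
  rcases T.anc_total (hu ha) (hw ha) with h | h
  · exact h
  · by_cases he : w = u
    · rw [← he]; exact T.anc_refl w
    · have h1 := T.anc_depth_lt h he
      have h2 : T.aDepth u ≤ T.aDepth w := hmax u (by simp [hu])
      omega

end PhyloTree

/-- If `(δ,ε)` is tree-like with least-resolved tree
`(T*,t*,λ*)`, then every refinement `T` of `T*` admits labelings `t`, `λ` such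
that `(T,t,λ)` explains `(δ,ε)`. -/
theorem statement11 {L M N : Type} (δ : L → L → M) (ε : L → L → Finset N)
    (Tstar : PhyloTree L) (tstar : Tstar.V → M) (lstar : Tstar.V → Finset N)
    (hd : Tstar.ExplainsDelta tstar δ) (he : Tstar.ExplainsEps lstar ε)
    (hlr : ∀ (T' : PhyloTree L) (t' : T'.V → M) (l' : T'.V → Finset N),
      T'.ExplainsDelta t' δ → T'.ExplainsEps l' ε → Tstar.clusters ⊆ T'.clusters) :
    ∀ T : PhyloTree L, Tstar.clusters ⊆ T.clusters →
      ∃ (t : T.V → M) (lam : T.V → Finset N),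
        T.ExplainsDelta t δ ∧ T.ExplainsEps lam ε := by
  classical
  intro T hH
  have hσ : ∀ v : T.V, ∃ w : Tstar.V, T.cluster v ⊆ Tstar.cluster w ∧
      ∀ u : Tstar.V, T.cluster v ⊆ Tstar.cluster u → Tstar.anc u w := fun v =>
    Tstar.exists_min_containing _ (T.exists_leaf_below v)
  choose σ hσ1 hσ2 using hσ
  have hlca : ∀ (x y : L) (w : T.V), T.isLCA x y w → Tstar.isLCA x y (σ w) := by
    intro x y w hw
    obtain ⟨hwx, hwy, hmin⟩ := hw
    refine ⟨hσ1 w hwx, hσ1 w hwy, fun u hux huy => ?_⟩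
    obtain ⟨u', hu'⟩ := hH ⟨u, rfl⟩
    have hxu' : T.anc u' (T.leaf x) := by
      have hx : x ∈ Tstar.cluster u := hux
      rw [← hu'] at hx; exact hx
    have hyu' : T.anc u' (T.leaf y) := by
      have hy : y ∈ Tstar.cluster u := huy
      rw [← hu'] at hy; exact hy
    have h1 : T.anc u' w := hmin u' hxu' hyu'
    have h2 : T.cluster w ⊆ Tstar.cluster u := by
      rw [← hu']; exact T.cluster_subset_of_anc h1
    exact hσ2 w u h2
  obtain ⟨lam, hlamspec⟩ : ∃ lam : T.V → Finset N, ∀ u : T.V,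
      lam u = if h : ∃ us : Tstar.V, Tstar.parent us ≠ us ∧ Tstar.cluster us = T.cluster u
        then lstar h.choose else ∅ :=
    ⟨_, fun _ => rfl⟩
  refine ⟨fun v => tstar (σ v), lam, ?_, ?_⟩
  · intro x y hxy w hw
    exact hd x y hxy (σ w) (hlca x y w hw)
  · intro x y hxy w hw k
    obtain ⟨hwx, hwy, hmin⟩ := hw
    obtain ⟨hsx, hsy, hsmin⟩ := hlca x y w ⟨hwx, hwy, hmin⟩
    rw [he x y hxy (σ w) (hlca x y w ⟨hwx, hwy, hmin⟩) k]
    constructor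
    · rintro ⟨us, ⟨hanc, hneq, hancy⟩, hk⟩
      have husp : Tstar.parent us ≠ us := by
        intro hfix
        have hroot := Tstar.fixed_eq_root hfix
        obtain ⟨n, hn⟩ := hanc
        rw [hroot, Tstar.root_iterate] at hn
        exact hneq (by rw [hroot, ← hn])
      obtain ⟨u, hu⟩ := hH ⟨us, rfl⟩
      have hcond : ∃ vs : Tstar.V, Tstar.parent vs ≠ vs ∧ Tstar.cluster vs = T.cluster u :=
        ⟨us, husp, hu.symm⟩
      have hchoose : hcond.choose = us :=
        Tstar.cluster_injective (hcond.choose_spec.2.trans hu)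
      have hlamu : lam u = lstar us := by
        rw [hlamspec u, dif_pos hcond, hchoose]
      have hxnot : x ∉ Tstar.cluster us := by
        intro hx
        exact hneq (Tstar.anc_antisymm (hsmin us hx hancy) hanc)
      have hyu : T.anc u (T.leaf y) := by
        have : y ∈ T.cluster u := by rw [hu]; exact hancy
        exact this
      have hxw : x ∈ T.cluster w := hwx
      have hxu : x ∉ T.cluster u := by rw [hu]; exact hxnot
      have hancwu : T.anc w u := by
        rcases T.anc_total hwy hyu with h | h
        · exact h
        · exact absurd (T.cluster_subset_of_anc h hxw) hxu
      have hneu : u ≠ w := by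
        intro h0; rw [h0] at hxu; exact hxu hxw
      refine ⟨u, ⟨hancwu, hneu, hyu⟩, by rw [hlamu]; exact hk⟩
    · rintro ⟨u, ⟨hanc, hneq, hancy⟩, hk⟩
      have hcond : ∃ vs : Tstar.V, Tstar.parent vs ≠ vs ∧ Tstar.cluster vs = T.cluster u := by
        by_contra hc
        rw [hlamspec u, dif_neg hc] at hk
        simp at hk
      obtain ⟨husp, hucl⟩ := hcond.choose_spec
      have hk' : k ∈ lstar hcond.choose := by
        rw [hlamspec u, dif_pos hcond] at hk; exact hk
      have hxu : x ∉ T.cluster u := by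
        intro hx
        exact hneq (T.anc_antisymm (hmin u hx hancy) hanc)
      refine ⟨hcond.choose, ⟨?_, ?_, ?_⟩, hk'⟩
      · refine Tstar.anc_of_subset fun z hz => ?_
        have hz' : z ∈ T.cluster u := by rw [← hucl]; exact hz
        exact hσ1 w (T.cluster_subset_of_anc hanc hz')
      · intro h0
        have hx : x ∈ Tstar.cluster hcond.choose := by rw [h0]; exact hsx
        rw [hucl] at hx
        exact hxu hx
      · have : y ∈ Tstar.cluster hcond.choose := by rw [hucl]; exact hancy
        exact this
end

section
/- Let δ: L^(2) → M, ε: L^(2) → 2^N, and M_∅ ⊆ M. Then (δ, ε) is M_∅-tree-like if and only if (δ, ε) is tree-like and its unique least-resolved tree (T*, t*, λ*) satisfies both (C) (every inner vertex has a child via an empty-labeled edge) and (C1) (if t*(v) ∈ M_∅ then λ*({v,u}) = ∅ for every child u of v). -/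
namespace PhyloTree

variable {L : Type} (S : PhyloTree L)

lemma anc_refl_s14 (v : S.V) : S.anc v v := ⟨0, rfl⟩

lemma anc_trans_s14 {a b c : S.V} (h1 : S.anc a b) (h2 : S.anc b c) : S.anc a c := by
  obtain ⟨m, hm⟩ := h1; obtain ⟨n, hn⟩ := h2
  exact ⟨m + n, by rw [Function.iterate_add_apply, hn, hm]⟩

lemma iterate_root (n : ℕ) : S.parent^[n] S.root = S.root := by
  induction n with
  | zero => rfl
  | succ n ih => rw [Function.iterate_succ_apply', ih, S.parent_root]

lemma anc_root (v : S.V) : S.anc S.root v := S.reach v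

lemma eq_root_of_anc {v : S.V} (h : S.anc v S.root) : v = S.root := by
  obtain ⟨n, hn⟩ := h; rw [iterate_root] at hn; exact hn.symm

lemma anc_antisymm_s14 {v w : S.V} (h1 : S.anc v w) (h2 : S.anc w v) : v = w := by
  obtain ⟨m, hm⟩ := h1; obtain ⟨n, hn⟩ := h2
  rcases Nat.eq_zero_or_pos m with h0 | hpos
  · subst h0; exact hm.symm
  · have hper : ∀ j, S.parent^[(n + m) * j] w = w := by
      intro j; induction j with
      | zero => rfl
      | succ j ih =>
        rw [Nat.mul_succ, Function.iterate_add_apply, Function.iterate_add_apply, hm, hn]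
        exact ih
    obtain ⟨k, hk⟩ := S.reach w
    have hle : k ≤ (n + m) * k := Nat.le_mul_of_pos_left k (by omega)
    have hw : w = S.root := by
      have := hper k
      rw [← Nat.sub_add_cancel hle, Function.iterate_add_apply, hk, iterate_root] at this
      exact this.symm
    have hv : v = S.root := by rw [← hm, hw, iterate_root]
    rw [hv, hw]

lemma anc_total_s14 {u v w : S.V} (hu : S.anc u w) (hv : S.anc v w) :
    S.anc u v ∨ S.anc v u := by
  obtain ⟨m, hm⟩ := hu; obtain ⟨n, hn⟩ := hv
  rcases le_total m n with h | h
  · right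
    exact ⟨n - m, by rw [← hm, ← Function.iterate_add_apply, Nat.sub_add_cancel h, hn]⟩
  · left
    exact ⟨m - n, by rw [← hn, ← Function.iterate_add_apply, Nat.sub_add_cancel h, hm]⟩

lemma isLeaf_no_desc {v w : S.V} (hL : S.isLeaf v) (h : S.anc v w) : w = v := by
  obtain ⟨n, hn⟩ := h
  induction n generalizing w with
  | zero => exact hn
  | succ n ih =>
    rw [Function.iterate_succ_apply] at hn
    have hp : S.parent w = v := ih hn
    exact (S.leaf_iff v).mpr hL w hp

lemma parent_ne_of_ne_root {v : S.V} (h : v ≠ S.root) : S.parent v ≠ v := by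
  intro he
  apply h
  obtain ⟨n, hn⟩ := S.reach v
  have : ∀ m, S.parent^[m] v = v := by
    intro m; induction m with
    | zero => rfl
    | succ m ih => rw [Function.iterate_succ_apply', ih, he]
  rw [this n] at hn; exact hn

lemma ne_root_of_strict {v w : S.V} (h : S.anc w v) (hne : v ≠ w) : v ≠ S.root := by
  intro hr; subst hr
  exact hne (eq_root_of_anc S h).symm

lemma anc_child {u v : S.V} (h : S.parent u = v) : S.anc v u :=
  ⟨1, by simpa using h⟩

lemma strict_anc_parent {r e : S.V} (h : S.anc r e) (hne : r ≠ e) :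
    S.anc r (S.parent e) := by
  obtain ⟨n, hn⟩ := h
  match n, hn with
  | 0, hn => exact absurd hn.symm hne
  | n + 1, hn => exact ⟨n, by rw [Function.iterate_succ_apply] at hn; exact hn⟩

lemma child_above {v w : S.V} (h : S.anc v w) (hne : w ≠ v) :
    ∃ c, S.parent c = v ∧ c ≠ v ∧ S.anc c w := by
  classical
  have hex : ∃ n, S.parent^[n] w = v := h
  set n := Nat.find hex with hndef
  have hspec : S.parent^[n] w = v := Nat.find_spec hex
  have hn0 : n ≠ 0 := by
    intro h0; rw [h0] at hspec; exact hne hspec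
  refine ⟨S.parent^[n - 1] w, ?_, ?_, ⟨n - 1, rfl⟩⟩
  · rw [← Function.iterate_succ_apply' S.parent (n - 1) w]
    have hn1 : (n - 1).succ = n := by omega
    rw [hn1]; exact hspec
  · exact Nat.find_min hex (Nat.pred_lt hn0)

lemma children_eq {c c' v : S.V} (h : S.parent c = v) (hc : c ≠ v)
    (h' : S.parent c' = v) (hc' : c' ≠ v) (hanc : S.anc c c') : c = c' := by
  obtain ⟨n, hn⟩ := hanc
  match n, hn with
  | 0, hn => exact hn.symm
  | n + 1, hn =>
    rw [Function.iterate_succ_apply, h'] at hn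
    exact absurd (anc_antisymm_s14 S ⟨n, hn⟩ (anc_child S h)) hc

lemma mem_cluster {x : L} {v : S.V} : x ∈ S.cluster v ↔ S.anc v (S.leaf x) := Iff.rfl

lemma cluster_mono {v w : S.V} (h : S.anc v w) : S.cluster w ⊆ S.cluster v :=
  fun _ hx => anc_trans_s14 S h hx

lemma exists_leaf_below_s14 (v : S.V) : ∃ x, S.anc v (S.leaf x) := by
  classical
  letI := S.fintypeV
  suffices H : ∀ n (v : S.V), (Finset.univ.filter (fun q => S.anc v q)).card ≤ n →
      ∃ x, S.anc v (S.leaf x) from H _ v le_rfl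
  intro n
  induction n with
  | zero =>
    intro v hcard
    have : v ∈ Finset.univ.filter (fun q => S.anc v q) := by
      simp [S.anc_refl_s14]
    have := Finset.card_pos.mpr ⟨v, this⟩
    omega
  | succ n ih =>
    intro v hcard
    by_cases hL : S.isLeaf v
    · obtain ⟨x, hx⟩ := hL
      exact ⟨x, hx ▸ S.anc_refl_s14 v⟩
    · obtain ⟨u, u', huu', hu, hu', hun, hu'n⟩ := S.phylo v hL
      have hsub : (Finset.univ.filter (fun q => S.anc u q)) ⊆
          (Finset.univ.filter (fun q => S.anc v q)) := by
        intro q hq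
        simp only [Finset.mem_filter, Finset.mem_univ, true_and] at hq ⊢
        exact anc_trans_s14 S (anc_child S hu) hq
      have hlt : (Finset.univ.filter (fun q => S.anc u q)).card <
          (Finset.univ.filter (fun q => S.anc v q)).card := by
        apply Finset.card_lt_card
        rw [Finset.ssubset_iff_of_subset hsub]
        refine ⟨v, by simp [S.anc_refl_s14], ?_⟩
        simp only [Finset.mem_filter, Finset.mem_univ, true_and]
        intro hvu
        exact hun (anc_antisymm_s14 S hvu (anc_child S hu))
      obtain ⟨x, hx⟩ := ih u (by omega)
      exact ⟨x, anc_trans_s14 S (anc_child S hu) hx⟩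

lemma cluster_leaf (x : L) : S.cluster (S.leaf x) = {x} := by
  ext y
  simp only [mem_cluster, Set.mem_singleton_iff]
  constructor
  · intro h
    exact S.leaf_inj (isLeaf_no_desc S ⟨x, rfl⟩ h)
  · rintro rfl; exact S.anc_refl_s14 _

lemma not_isLeaf_of {v : S.V} {a b : L} (ha : a ∈ S.cluster v) (hb : b ∈ S.cluster v)
    (hab : a ≠ b) : ¬ S.isLeaf v := by
  intro hL
  exact hab (S.leaf_inj ((isLeaf_no_desc S hL ha).trans (isLeaf_no_desc S hL hb).symm))

lemma children_eq_of_mem {v c c' : S.V} {y : L} (hc : S.parent c = v) (hcn : c ≠ v)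
    (hc' : S.parent c' = v) (hc'n : c' ≠ v)
    (h1 : S.anc c (S.leaf y)) (h2 : S.anc c' (S.leaf y)) : c = c' := by
  rcases anc_total_s14 S h1 h2 with h | h
  · exact children_eq S hc hcn hc' hc'n h
  · exact (children_eq S hc' hc'n hc hcn h).symm

lemma cluster_subset_anc {v w : S.V} (h : S.cluster w ⊆ S.cluster v) : S.anc v w := by
  obtain ⟨y0, hy0⟩ := exists_leaf_below_s14 S w
  have hy0v : y0 ∈ S.cluster v := h hy0
  rcases anc_total_s14 S hy0 hy0v with hvw | hwv
  · -- S.anc w v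
    by_cases hew : w = v
    · exact hew ▸ S.anc_refl_s14 w
    · -- v strictly below w
      exfalso
      have hwnl : ¬ S.isLeaf w := by
        intro hL; exact hew (isLeaf_no_desc S hL hvw).symm
      obtain ⟨c, hcp, hcn, hca⟩ := child_above S hvw (Ne.symm hew)
      obtain ⟨u, u', huu', hu, hu', hun, hu'n⟩ := S.phylo w hwnl
      have hc2 : ∃ c2, S.parent c2 = w ∧ c2 ≠ w ∧ c2 ≠ c := by
        by_cases h1 : u = c
        · exact ⟨u', hu', hu'n, by rw [← h1]; exact huu'.symm⟩
        · exact ⟨u, hu, hun, h1⟩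
      obtain ⟨c2, hc2p, hc2n, hc2c⟩ := hc2
      obtain ⟨z, hz⟩ := exists_leaf_below_s14 S c2
      have hzw : z ∈ S.cluster w := anc_trans_s14 S (anc_child S hc2p) hz
      have hzc : z ∈ S.cluster c := cluster_mono S hca (h hzw)
      exact hc2c (children_eq_of_mem S hc2p hc2n hcp hcn hz hzc)
  · exact hwv

lemma cluster_inj {v w : S.V} (h : S.cluster v = S.cluster w) : v = w :=
  anc_antisymm_s14 S (cluster_subset_anc S h.ge) (cluster_subset_anc S h.le)

lemma isLCA_of_children {v c c' : S.V} {x y : L} (hc : S.parent c = v) (hcn : c ≠ v)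
    (hc' : S.parent c' = v) (hc'n : c' ≠ v) (hcc' : c ≠ c')
    (hx : x ∈ S.cluster c) (hy : y ∈ S.cluster c') : x ≠ y ∧ S.isLCA x y v := by
  constructor
  · rintro rfl
    exact hcc' (children_eq_of_mem S hc hcn hc' hc'n hx hy)
  · refine ⟨anc_trans_s14 S (anc_child S hc) hx, anc_trans_s14 S (anc_child S hc') hy, ?_⟩
    intro r hrx hry
    rcases anc_total_s14 S hrx hx with hrc | hcr
    · by_cases hrceq : r = c
      · exfalso; subst hrceq
        exact hcc' (children_eq_of_mem S hc hcn hc' hc'n hry hy)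
      · exact hc ▸ strict_anc_parent S hrc hrceq
    · exfalso
      exact hcc' (children_eq_of_mem S hc hcn hc' hc'n (anc_trans_s14 S hcr hry) hy)

lemma pair_exists {v : S.V} {y : L} (hnl : ¬ S.isLeaf v) (hy : S.anc v (S.leaf y)) :
    ∃ x, x ≠ y ∧ S.isLCA x y v := by
  have hvy : S.leaf y ≠ v := fun h => hnl ⟨y, h⟩
  obtain ⟨cy, hcy, hcyn, hcya⟩ := child_above S hy hvy
  obtain ⟨u, u', huu', hu, hu', hun, hu'n⟩ := S.phylo v hnl
  have hc2 : ∃ c2, S.parent c2 = v ∧ c2 ≠ v ∧ c2 ≠ cy := by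
    by_cases h1 : u = cy
    · exact ⟨u', hu', hu'n, by rw [← h1]; exact huu'.symm⟩
    · exact ⟨u, hu, hun, h1⟩
  obtain ⟨c2, hc2p, hc2n, hc2c⟩ := hc2
  obtain ⟨x, hx⟩ := exists_leaf_below_s14 S c2
  obtain ⟨hxy, hlca⟩ := isLCA_of_children S hc2p hc2n hcy hcyn hc2c hx hcya
  exact ⟨x, hxy, hlca⟩

lemma eq_child_of_between {p c r : S.V} (hc : S.parent c = p) (hrc : S.anc r c)
    (hpr : S.anc p r) (hrp : r ≠ p) : r = c := by
  obtain ⟨n, hn⟩ := hrc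
  match n, hn with
  | 0, hn => exact hn.symm
  | n + 1, hn =>
    rw [Function.iterate_succ_apply, hc] at hn
    exact absurd (anc_antisymm_s14 S ⟨n, hn⟩ hpr) hrp

noncomputable def dep (v : S.V) : ℕ := @Nat.find _ (Classical.decPred _) (S.reach v)

lemma dep_spec (v : S.V) : S.parent^[S.dep v] v = S.root :=
  @Nat.find_spec _ (Classical.decPred _) (S.reach v)

lemma dep_lt {v : S.V} (h : v ≠ S.root) : S.dep (S.parent v) < S.dep v := by
  have h0 : S.dep v ≠ 0 := by
    intro h'
    have := dep_spec S v
    rw [h'] at this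
    exact h this
  have hit : S.parent^[S.dep v - 1] (S.parent v) = S.root := by
    rw [← Function.iterate_succ_apply]
    have hn1 : (S.dep v - 1).succ = S.dep v := by omega
    rw [hn1]; exact dep_spec S v
  have hle : S.dep (S.parent v) ≤ S.dep v - 1 :=
    @Nat.find_min' _ (Classical.decPred _) (S.reach (S.parent v)) _ hit
  omega

end PhyloTree
namespace PhyloTree

lemma delta_inc {L M : Type} {δ : L → L → M} (S1 S2 : PhyloTree L)
    (t1 : S1.V → M) (t2 : S2.V → M) (h1 : S1.ExplainsDelta t1 δ)
    (hdisc : S1.Discriminating t1) (h2 : S2.ExplainsDelta t2 δ) :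
    S1.clusters ⊆ S2.clusters := by
  classical
  rintro A ⟨p, rfl⟩
  suffices H : ∀ n (p : S1.V), S1.dep p = n → S1.cluster p ∈ S2.clusters from H _ p rfl
  intro n
  induction n using Nat.strong_induction_on with
  | _ n ih =>
  intro p hdep
  by_cases hroot : p = S1.root
  · subst hroot
    exact ⟨S2.root, Set.ext fun x => iff_of_true (S2.anc_root _) (S1.anc_root _)⟩
  by_cases hLf : S1.isLeaf p
  · obtain ⟨x, hx⟩ := hLf
    exact ⟨S2.leaf x, by rw [← hx, S1.cluster_leaf, S2.cluster_leaf]⟩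
  -- main case
  subst hdep
  have hpar : S1.parent p ≠ p := S1.parent_ne_of_ne_root hroot
  obtain ⟨q, hq⟩ := ih _ (S1.dep_lt hroot) (S1.parent p) rfl
  obtain ⟨u, u', huu', hu, hu', hun, hu'n⟩ := S1.phylo p hLf
  obtain ⟨a, ha⟩ := S1.exists_leaf_below_s14 u
  obtain ⟨b, hb⟩ := S1.exists_leaf_below_s14 u'
  have haB : a ∈ S1.cluster p := S1.anc_trans_s14 (S1.anc_child hu) ha
  have hbB : b ∈ S1.cluster p := S1.anc_trans_s14 (S1.anc_child hu') hb
  have hab : a ≠ b := by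
    rintro rfl
    exact huu' (S1.children_eq_of_mem hu hun hu' hu'n ha hb)
  have hex : ∃ k, S1.cluster p ⊆ S2.cluster (S2.parent^[k] (S2.leaf a)) := by
    obtain ⟨k0, hk0⟩ := S2.reach (S2.leaf a)
    exact ⟨k0, by rw [hk0]; intro z _; exact S2.anc_root _⟩
  set q1 := S2.parent^[Nat.find hex] (S2.leaf a) with hq1def
  have hBq1 : S1.cluster p ⊆ S2.cluster q1 := Nat.find_spec hex
  have hminq : ∀ r, S1.cluster p ⊆ S2.cluster r → S2.anc r q1 := by
    intro r hr
    obtain ⟨m, hm⟩ := hr haB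
    have hfle : Nat.find hex ≤ m := Nat.find_min' hex (by rw [hm]; exact hr)
    exact ⟨m - Nat.find hex, by
      rw [hq1def, ← Function.iterate_add_apply, Nat.sub_add_cancel hfle, hm]⟩
  have hq1nl : ¬ S2.isLeaf q1 := S2.not_isLeaf_of (hBq1 haB) (hBq1 hbB) hab
  have hq1a : S2.leaf a ≠ q1 := fun h => hq1nl ⟨a, h⟩
  have hq1b : S2.leaf b ≠ q1 := fun h => hq1nl ⟨b, h⟩
  obtain ⟨ca, hcap, hcan, hcaa⟩ := S2.child_above (hBq1 haB) hq1a
  obtain ⟨cb, hcbp, hcbn, hcba⟩ := S2.child_above (hBq1 hbB) hq1b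
  have hpair : ∃ (xb yb : L) (d d' : S2.V),
      xb ∈ S1.cluster p ∧ yb ∈ S1.cluster p ∧ S1.isLCA xb yb p ∧ xb ≠ yb ∧
      S2.parent d = q1 ∧ d ≠ q1 ∧ S2.parent d' = q1 ∧ d' ≠ q1 ∧ d ≠ d' ∧
      xb ∈ S2.cluster d ∧ yb ∈ S2.cluster d' := by
    by_cases hcab : ca = cb
    · have hnots : ¬ S1.cluster p ⊆ S2.cluster ca := by
        intro hsub
        exact hcan (S2.anc_antisymm_s14 (hminq ca hsub) (S2.anc_child hcap))
      obtain ⟨g, hgB, hgca⟩ := Set.not_subset.mp hnots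
      have hq1g : S2.leaf g ≠ q1 := fun h => hq1nl ⟨g, h⟩
      obtain ⟨cg, hcgp, hcgn, hcga⟩ := S2.child_above (hBq1 hgB) hq1g
      have hcgca : cg ≠ ca := fun h => hgca (h ▸ hcga)
      have hpg : S1.leaf g ≠ p := fun h => hLf ⟨g, h⟩
      obtain ⟨cg1, hcg1p, hcg1n, hcg1a⟩ := S1.child_above hgB hpg
      by_cases hgu : cg1 = u
      · have hpr := S1.isLCA_of_children hu' hu'n hu hun huu'.symm hb (hgu ▸ hcg1a)
        exact ⟨b, g, cb, cg, hbB, hgB, hpr.2, hpr.1, hcbp, hcbn, hcgp, hcgn,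
          fun h => hcgca (h ▸ hcab).symm, hcba, hcga⟩
      · have hpr := S1.isLCA_of_children hu hun hcg1p hcg1n
          (fun h => hgu h.symm) ha hcg1a
        exact ⟨a, g, ca, cg, haB, hgB, hpr.2, hpr.1, hcap, hcan, hcgp, hcgn,
          fun h => hcgca h.symm, hcaa, hcga⟩
    · have hpr := S1.isLCA_of_children hu hun hu' hu'n huu' ha hb
      exact ⟨a, b, ca, cb, haB, hbB, hpr.2, hpr.1, hcap, hcan, hcbp, hcbn,
        hcab, hcaa, hcba⟩
  obtain ⟨xb, yb, d, d', hxB, hyB, hlca1, hxyne, hdp, hdn, hd'p, hd'n, hdd', hxd, hyd'⟩ :=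
    hpair
  have hlca2 : S2.isLCA xb yb q1 := (S2.isLCA_of_children hdp hdn hd'p hd'n hdd' hxd hyd').2
  refine ⟨q1, Set.Subset.antisymm ?_ hBq1⟩
  intro z hz
  by_contra hzB
  have hzP : z ∈ S1.cluster (S1.parent p) := by
    rw [← hq]
    have hqq1 : S2.anc q q1 := hminq q (by
      rw [hq]; exact fun w hw => S1.cluster_mono (S1.anc_child rfl) hw)
    exact S2.cluster_mono hqq1 hz
  have hPz : ∀ x ∈ S1.cluster p, x ≠ z ∧ S1.isLCA x z (S1.parent p) := by
    intro x hxB2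
    constructor
    · rintro rfl; exact hzB hxB2
    · refine ⟨S1.anc_trans_s14 (S1.anc_child rfl) hxB2, hzP, ?_⟩
      intro r hrx hrz
      rcases S1.anc_total_s14 hrx hxB2 with hrp | hpr
      · by_cases hrpeq : r = p
        · exfalso; subst hrpeq; exact hzB hrz
        · exact strict_anc_parent S1 hrp hrpeq
      · exfalso; exact hzB (S1.anc_trans_s14 hpr hrz)
  have hq1z : S2.leaf z ≠ q1 := fun h => hq1nl ⟨z, h⟩
  obtain ⟨cz, hczp, hczn, hcza⟩ := S2.child_above hz hq1z
  have hfin : t1 p = t1 (S1.parent p) := by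
    by_cases hczd : cz = d
    · have h3 := (S2.isLCA_of_children hd'p hd'n hczp hczn
        (fun h => hdd' (h.trans hczd).symm) hyd' hcza).2
      have hyz : yb ≠ z := (hPz yb hyB).1
      calc t1 p = δ xb yb := h1 xb yb hxyne p hlca1
      _ = t2 q1 := (h2 xb yb hxyne q1 hlca2).symm
      _ = δ yb z := h2 yb z hyz q1 h3
      _ = t1 (S1.parent p) := (h1 yb z hyz (S1.parent p) (hPz yb hyB).2).symm
    · have h3 := (S2.isLCA_of_children hdp hdn hczp hczn
        (fun h => hczd h.symm) hxd hcza).2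
      have hxz : xb ≠ z := (hPz xb hxB).1
      calc t1 p = δ xb yb := h1 xb yb hxyne p hlca1
      _ = t2 q1 := (h2 xb yb hxyne q1 hlca2).symm
      _ = δ xb z := h2 xb z hxz q1 h3
      _ = t1 (S1.parent p) := (h1 xb z hxz (S1.parent p) (hPz xb hxB).2).symm
  exact hdisc p ⟨hpar, hLf⟩ hfin

end PhyloTree
namespace PhyloTree

lemma labelSum_update {L N : Type} (S : PhyloTree L) (lam lam' : S.V → Finset N)
    (u : S.V) (hpu : S.parent u ≠ u) (h'u : lam' u = ∅)
    (hoth : ∀ e, e ≠ u → lam' e = lam e) :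
    S.labelSum lam = S.labelSum lam' + (lam u).card := by
  letI := S.fintypeV
  letI := Classical.decEq S.V
  show (∑ v : S.V, if S.parent v = v then 0 else (lam v).card)
      = (∑ v : S.V, if S.parent v = v then 0 else (lam' v).card) + (lam u).card
  have key : ∀ v : S.V, (if S.parent v = v then 0 else (lam v).card)
      = (if S.parent v = v then 0 else (lam' v).card)
        + (if v = u then (lam u).card else 0) := by
    intro v
    by_cases h1 : v = u
    · subst h1
      rw [if_neg hpu, if_neg hpu, if_pos rfl, h'u]
      simp
    · rw [hoth v h1, if_neg h1, Nat.add_zero]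
  calc (∑ v : S.V, if S.parent v = v then 0 else (lam v).card)
      = ∑ v : S.V, ((if S.parent v = v then 0 else (lam' v).card)
          + (if v = u then (lam u).card else 0)) :=
        Finset.sum_congr rfl (fun v _ => key v)
    _ = (∑ v : S.V, if S.parent v = v then 0 else (lam' v).card)
          + ∑ v : S.V, (if v = u then (lam u).card else 0) := Finset.sum_add_distrib
    _ = (∑ v : S.V, if S.parent v = v then 0 else (lam' v).card) + (lam u).card := by
        rw [Finset.sum_ite_eq' Finset.univ u (fun _ => (lam u).card)]
        simp

end PhyloTree
/-- `(δ,ε)` is `M₀`-tree-like iff `(δ,ε)` is tree-like and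
its unique least-resolved tree `(T*,t*,λ*)` (whose cluster system is
`H(T_δ) ∪ H(T_ε)` and whose edge labeling has minimum total label count)
satisfies both (C) and (C1). -/
theorem statement14 {L M N : Type} (δ : L → L → M) (ε : L → L → Finset N)
    (M0 : Set M)
    (Tδ : PhyloTree L) (tδ : Tδ.V → M)
    (hδexp : Tδ.ExplainsDelta tδ δ) (hδdisc : Tδ.Discriminating tδ)
    (Tε : PhyloTree L) (lamε : Tε.V → Finset N) (hεexp : Tε.ExplainsEps lamε ε)
    (hεleast : ∀ (T : PhyloTree L) (lam : T.V → Finset N),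
      T.ExplainsEps lam ε → PhyloTree.LeLabeled Tε lamε T lam)
    (Tstar : PhyloTree L) (tstar : Tstar.V → M) (lstar : Tstar.V → Finset N)
    (hclus : Tstar.clusters = Tδ.clusters ∪ Tε.clusters)
    (hd : Tstar.ExplainsDelta tstar δ) (he : Tstar.ExplainsEps lstar ε)
    (hmin : ∀ l' : Tstar.V → Finset N, Tstar.ExplainsEps l' ε →
      Tstar.labelSum lstar ≤ Tstar.labelSum l') :
    PhyloTree.MTreeLike δ ε M0 ↔
      (PhyloTree.TreeLike δ ε ∧ Tstar.CondC lstar ∧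
        Tstar.CondC1 tstar lstar M0) := by
  constructor
  · rintro ⟨T, tT, lamT, hdT, heT, hCT, hC1T⟩
    have hsubδ : Tδ.clusters ⊆ T.clusters := PhyloTree.delta_inc Tδ T tδ tT hδexp hδdisc hdT
    have hsubε : Tε.clusters ⊆ T.clusters := (hεleast T lamT heT).1
    have hsub : ∀ a : Tstar.V, ∃ b : T.V, T.cluster b = Tstar.cluster a := by
      intro a
      have hmem : Tstar.cluster a ∈ Tδ.clusters ∪ Tε.clusters := by
        rw [← hclus]; exact ⟨a, rfl⟩
      rcases hmem with hm | hm
      · exact hsubδ hm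
      · exact hsubε hm
    choose ψ hψ using hsub
    have hmemψ : ∀ (a : Tstar.V) (y : L),
        y ∈ Tstar.cluster a ↔ T.anc (ψ a) (T.leaf y) := by
      intro a y; rw [← hψ a]; exact Iff.rfl
    have hancψ' : ∀ a b : Tstar.V, T.anc (ψ a) (ψ b) → Tstar.anc a b := by
      intro a b h
      exact Tstar.cluster_subset_anc (by rw [← hψ a, ← hψ b]; exact T.cluster_mono h)
    have WD : ∀ (a : Tstar.V) (x y : L), x ≠ y → Tstar.isLCA x y a →
        ∀ k, (k ∈ ε x y ↔ ∃ e, T.onPath (ψ a) y e ∧ k ∈ lamT e) := by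
      intro a x y hxy hlca k
      have hxa : x ∈ Tstar.cluster a := hlca.1
      have hya : y ∈ Tstar.cluster a := hlca.2.1
      have haTnl : ¬ T.isLeaf (ψ a) :=
        T.not_isLeaf_of ((hmemψ a x).1 hxa) ((hmemψ a y).1 hya) hxy
      obtain ⟨x', hx'y, hlcaT⟩ := T.pair_exists haTnl ((hmemψ a y).1 hya)
      have hlcaS : Tstar.isLCA x' y a := by
        refine ⟨(hmemψ a x').2 hlcaT.1, hya, ?_⟩
        intro r hrx hry
        exact hancψ' r a (hlcaT.2.2 (ψ r) ((hmemψ r x').1 hrx) ((hmemψ r y).1 hry))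
      exact ((he x y hxy a hlca k).trans (he x' y hx'y a hlcaS k).symm).trans
        (heT x' y hx'y (ψ a) hlcaT k)
    have SWAP : ∀ u0 : Tstar.V, u0 ≠ Tstar.parent u0 →
        (∀ e, T.anc (ψ (Tstar.parent u0)) e → e ≠ ψ (Tstar.parent u0) →
          T.anc e (ψ u0) → lamT e = ∅) → lstar u0 = ∅ := by
      intro u0 huv hseg
      classical
      set v0 := Tstar.parent u0 with hv0
      set l' : Tstar.V → Finset N := fun e => if e = u0 then ∅ else lstar e with hl'
      have hl'u : l' u0 = ∅ := by simp [hl']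
      have hl'oth : ∀ e, e ≠ u0 → l' e = lstar e := by intro e he'; simp [hl', he']
      have hexp' : Tstar.ExplainsEps l' ε := by
        intro x y hxy w hw k
        constructor
        · intro hk
          obtain ⟨e, hpath, hke⟩ := (he x y hxy w hw k).1 hk
          by_cases heu : e = u0
          · rw [heu] at hpath hke
            obtain ⟨hwa, hew, hey⟩ := hpath
            have hyu : Tstar.anc u0 (Tstar.leaf y) := hey
            have hvy : Tstar.anc v0 (Tstar.leaf y) :=
              Tstar.anc_trans_s14 (Tstar.anc_child hv0.symm) hyu
            have hvnl : ¬ Tstar.isLeaf v0 := by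
              intro hL
              exact huv (Tstar.isLeaf_no_desc hL (Tstar.anc_child hv0.symm))
            obtain ⟨x2, hx2y, hlv⟩ := Tstar.pair_exists hvnl hvy
            have hkx2 : k ∈ ε x2 y := (he x2 y hx2y v0 hlv k).2
              ⟨u0, ⟨Tstar.anc_child hv0.symm, huv, hyu⟩, hke⟩
            obtain ⟨eT, hpT, hkeT⟩ := (WD v0 x2 y hx2y hlv k).1 hkx2
            obtain ⟨hp1, hp2, hp3⟩ := hpT
            have huy_T : T.anc (ψ u0) (T.leaf y) := (hmemψ u0 y).1 hyu
            by_cases heψ : eT = ψ u0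
            · exfalso
              rw [hseg eT hp1 hp2 (by rw [heψ]; exact T.anc_refl_s14 _)] at hkeT
              exact absurd hkeT (Finset.notMem_empty k)
            rcases T.anc_total_s14 hp3 huy_T with hAbove | hBelow
            · exfalso
              rw [hseg eT hp1 hp2 hAbove] at hkeT
              exact absurd hkeT (Finset.notMem_empty k)
            · have hunl : ¬ Tstar.isLeaf u0 := by
                intro hL
                have hly : Tstar.leaf y = u0 := Tstar.isLeaf_no_desc hL hyu
                have hψu : ψ u0 = T.leaf y := by
                  apply T.cluster_inj
                  rw [hψ u0, ← hly, Tstar.cluster_leaf, T.cluster_leaf]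
                apply heψ
                rw [hψu]
                exact T.isLeaf_no_desc ⟨y, rfl⟩ (hψu ▸ hBelow)
              obtain ⟨x0, hx0y, hlu⟩ := Tstar.pair_exists hunl hyu
              have hk0 : k ∈ ε x0 y :=
                (WD u0 x0 y hx0y hlu k).2 ⟨eT, ⟨hBelow, heψ, hp3⟩, hkeT⟩
              obtain ⟨e2, hq2, hke2⟩ := (he x0 y hx0y u0 hlu k).1 hk0
              obtain ⟨hq21, hq22, hq23⟩ := hq2
              refine ⟨e2, ⟨Tstar.anc_trans_s14 hwa hq21, ?_, hq23⟩, ?_⟩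
              · intro hq2w
                exact hew (Tstar.anc_antisymm_s14 (hq2w ▸ hq21) hwa)
              · rw [hl'oth e2 hq22]; exact hke2
          · exact ⟨e, hpath, by rw [hl'oth e heu]; exact hke⟩
        · rintro ⟨e, hpath, hke⟩
          by_cases heu : e = u0
          · subst heu; rw [hl'u] at hke; exact absurd hke (Finset.notMem_empty k)
          · rw [hl'oth e heu] at hke
            exact (he x y hxy w hw k).2 ⟨e, hpath, hke⟩
      have hle := hmin l' hexp'
      have hpne : Tstar.parent u0 ≠ u0 := fun h => huv h.symm
      have hsum := Tstar.labelSum_update lstar l' u0 hpne hl'u hl'oth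
      have hc0 : (lstar u0).card = 0 := by omega
      exact Finset.card_eq_zero.mp hc0
    have hCstar : Tstar.CondC lstar := by
      intro v hvnl
      classical
      letI := T.fintypeV
      have descent : ∀ n (p : T.V),
          (Finset.univ.filter (fun q => T.anc p q)).card ≤ n →
          T.anc (ψ v) p →
          (∀ e, T.anc (ψ v) e → e ≠ ψ v → T.anc e p → lamT e = ∅) →
          T.cluster p ⊆ Tstar.cluster v →
          (∀ u1, Tstar.parent u1 = v → u1 ≠ v → ∀ z, z ∈ Tstar.cluster u1 →
            z ∈ T.cluster p → Tstar.cluster u1 ⊆ T.cluster p) →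
          ∃ u0, Tstar.childOf u0 v ∧ lstar u0 = ∅ := by
        intro n
        induction n with
        | zero =>
          intro p hcard _ _ _ _
          have hm : p ∈ Finset.univ.filter (fun q => T.anc p q) := by simp [T.anc_refl_s14]
          have := Finset.card_pos.mpr ⟨p, hm⟩
          omega
        | succ n ih =>
          intro p hcard hanc hseg hsubv hsat
          obtain ⟨y0, hy0⟩ := T.exists_leaf_below_s14 p
          have hy0v : y0 ∈ Tstar.cluster v := hsubv hy0
          have hvly : Tstar.leaf y0 ≠ v := fun h => hvnl ⟨y0, h⟩
          obtain ⟨u0, hu0p, hu0n, hu0a⟩ := Tstar.child_above hy0v hvly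
          have hsat0 : Tstar.cluster u0 ⊆ T.cluster p := hsat u0 hu0p hu0n y0 hu0a hy0
          by_cases hEq : T.cluster p ⊆ Tstar.cluster u0
          · have hψu0 : ψ u0 = p := T.cluster_inj (by
              rw [hψ u0]; exact Set.Subset.antisymm hsat0 hEq)
            refine ⟨u0, ⟨hu0p, hu0n⟩, ?_⟩
            apply SWAP u0 (by rw [hu0p]; exact hu0n)
            intro e h1 h2 h3
            rw [hu0p] at h1 h2
            rw [hψu0] at h3
            exact hseg e h1 h2 h3
          · obtain ⟨z, hzp, hzu0⟩ := Set.not_subset.mp hEq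
            have hzy0 : z ≠ y0 := fun h => hzu0 (by rw [h]; exact hu0a)
            have hpnl : ¬ T.isLeaf p := T.not_isLeaf_of hzp hy0 hzy0
            obtain ⟨c, hcchild, hc0⟩ := hCT p hpnl
            obtain ⟨hcp, hcn⟩ := hcchild
            have hsubc : (Finset.univ.filter (fun q => T.anc c q)) ⊆
                (Finset.univ.filter (fun q => T.anc p q)) := by
              intro q hq
              simp only [Finset.mem_filter, Finset.mem_univ, true_and] at hq ⊢
              exact T.anc_trans_s14 (T.anc_child hcp) hq
            have hlt : (Finset.univ.filter (fun q => T.anc c q)).card <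
                (Finset.univ.filter (fun q => T.anc p q)).card := by
              apply Finset.card_lt_card
              rw [Finset.ssubset_iff_of_subset hsubc]
              refine ⟨p, by simp [T.anc_refl_s14], ?_⟩
              simp only [Finset.mem_filter, Finset.mem_univ, true_and]
              intro hca
              exact hcn (T.anc_antisymm_s14 hca (T.anc_child hcp))
            refine ih c (by omega) (T.anc_trans_s14 hanc (T.anc_child hcp)) ?_ ?_ ?_
            · intro e h1 h2 h3
              by_cases hec : e = c
              · subst hec; exact hc0
              · exact hseg e h1 h2 (hcp ▸ T.strict_anc_parent h3 hec)
            · exact fun w hw => hsubv (T.cluster_mono (T.anc_child hcp) hw)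
            · intro u1 hu1p hu1n z1 hz1u hz1c
              have hz1p : z1 ∈ T.cluster p := T.cluster_mono (T.anc_child hcp) hz1c
              have hsat1 : Tstar.cluster u1 ⊆ T.cluster p := hsat u1 hu1p hu1n z1 hz1u hz1p
              have hcz1 : T.anc c (T.leaf z1) := hz1c
              have hu1z1 : T.anc (ψ u1) (T.leaf z1) := (hmemψ u1 z1).1 hz1u
              rcases T.anc_total_s14 hcz1 hu1z1 with hcu | huc
              · intro w hw
                have hw' : w ∈ T.cluster (ψ u1) := by rw [hψ u1]; exact hw
                exact T.cluster_mono hcu hw'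
              · have hpu1 : T.anc p (ψ u1) :=
                  T.cluster_subset_anc (by rw [hψ u1]; exact hsat1)
                have hu1ne : ψ u1 ≠ p := by
                  intro hpe
                  have hclu : Tstar.cluster u1 = T.cluster p := by rw [← hψ u1, hpe]
                  have hy0u1 : y0 ∈ Tstar.cluster u1 := by rw [hclu]; exact hy0
                  have hu1u0 : u1 = u0 :=
                    Tstar.children_eq_of_mem hu1p hu1n hu0p hu0n hy0u1 hu0a
                  apply hEq
                  rw [← hu1u0, hclu]
                have hψu1c : ψ u1 = c := T.eq_child_of_between hcp huc hpu1 hu1ne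
                intro w hw
                have hw' : w ∈ T.cluster (ψ u1) := by rw [hψ u1]; exact hw
                rw [hψu1c] at hw'
                exact hw'
      refine descent _ (ψ v) le_rfl (T.anc_refl_s14 _) ?_ ?_ ?_
      · intro e h1 h2 h3
        exact absurd (T.anc_antisymm_s14 h3 h1) h2
      · intro w hw; rw [hψ v] at hw; exact hw
      · intro u1 hu1p hu1n z hz1 hz2 w hw
        rw [hψ v]
        exact Tstar.cluster_mono (Tstar.anc_child hu1p) hw
    have hC1star : Tstar.CondC1 tstar lstar M0 := by
      intro v u hchild hM0
      obtain ⟨hup, hun⟩ := hchild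
      apply SWAP u (by rw [hup]; exact hun)
      intro e h1 h2 h3
      rw [hup] at h1 h2
      have heroot : e ≠ T.root := by
        intro hr; subst hr; exact h2 (T.eq_root_of_anc h1).symm
      have hpe : T.parent e ≠ e := T.parent_ne_of_ne_root heroot
      apply hC1T (T.parent e) e ⟨rfl, fun hh => hpe hh.symm⟩
      obtain ⟨y, hy⟩ := T.exists_leaf_below_s14 (ψ u)
      have hyu : y ∈ Tstar.cluster u := (hmemψ u y).2 hy
      have hye : T.anc e (T.leaf y) := T.anc_trans_s14 h3 hy
      have hype : T.anc (T.parent e) (T.leaf y) := T.anc_trans_s14 (T.anc_child rfl) hye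
      have hnsub : ¬ (T.cluster (T.parent e) ⊆ T.cluster e) := by
        intro hs
        exact hpe (T.anc_antisymm_s14 (T.cluster_subset_anc hs) (T.anc_child rfl)).symm
      obtain ⟨x, hxpe, hxe⟩ := Set.not_subset.mp hnsub
      have hxy : x ≠ y := fun h => hxe (by rw [h]; exact hye)
      have hlcaT : T.isLCA x y (T.parent e) := by
        refine ⟨hxpe, hype, ?_⟩
        intro r hrx hry
        rcases T.anc_total_s14 hry hye with hre | her
        · by_cases hreq : r = e
          · exfalso; subst hreq; exact hxe hrx
          · exact T.strict_anc_parent hre hreq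
        · exfalso; exact hxe (T.anc_trans_s14 her hrx)
      have h1δ : tT (T.parent e) = δ x y := hdT x y hxy (T.parent e) hlcaT
      have hlcaS : Tstar.isLCA x y v := by
        refine ⟨?_, ?_, ?_⟩
        · have hvpe : T.anc (ψ v) (T.parent e) := T.strict_anc_parent h1 (Ne.symm h2)
          exact (hmemψ v x).2 (T.cluster_mono hvpe hxpe)
        · exact Tstar.cluster_mono (Tstar.anc_child hup) hyu
        · intro r hrx hry
          rcases Tstar.anc_total_s14 hry hyu with hru | hur
          · by_cases hrequ : r = u
            · exfalso
              exact hxe (T.cluster_mono h3 ((hmemψ u x).1 (hrequ ▸ hrx)))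
            · exact hup ▸ Tstar.strict_anc_parent hru hrequ
          · exfalso
            have hxu : x ∈ Tstar.cluster u := Tstar.cluster_mono hur hrx
            exact hxe (T.cluster_mono h3 ((hmemψ u x).1 hxu))
      have h2δ : tstar v = δ x y := hd x y hxy v hlcaS
      rw [h1δ, ← h2δ]
      exact hM0
    exact ⟨⟨T, tT, lamT, hdT, heT⟩, hCstar, hC1star⟩
  · rintro ⟨-, hC, hC1⟩
    exact ⟨Tstar, tstar, lstar, hd, he, hC, hC1⟩
end
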